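/- arXiv:1708.02857 — 2 statements merged into one kernel-verified Lean document; each statement's English description precedes it below -/
import Mathlib

section
/- Fix an integer j > 1, and regard J and Y as two algebraically independent commuting indeterminates over the rationals. For each integer k with 0 ≤ k ≤ j, define c_{2j+1-k} = (J+iY)^{2j+1-k} + (J-iY)^{2j+1-k}, where i^2 = -1. Then the set B_j = {c_{2j+1}, J c_{2j}, J^2 c_{2j-1}, ..., J^j c_{j+1}} consists of j+1 polynomials that are linearly independent over the rationals, and they form a basis of the (j+1)-dimensional rational vector space spanned by {J^{2j+1}, J^{2j-1} Y^2, ..., J Y^{2j}}. -/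
open MvPolynomial

noncomputable def Jp : MvPolynomial (Fin 2) ℂ := X 0
noncomputable def Yp : MvPolynomial (Fin 2) ℂ := X 1

/-- `cpoly l = (J + iY)^l + (J - iY)^l` in `ℂ[J,Y]`. -/
noncomputable def cpoly (l : ℕ) : MvPolynomial (Fin 2) ℂ :=
  (Jp + C Complex.I * Yp) ^ l + (Jp - C Complex.I * Yp) ^ l

noncomputable def psi : MvPolynomial (Fin 2) ℂ →ₐ[ℂ] Polynomial ℂ :=
  aeval ![1 + Polynomial.X, Polynomial.C (-Complex.I) * (1 - Polynomial.X)]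

lemma psi_cpoly (l : ℕ) : psi (cpoly l) = 2 ^ l * (1 + Polynomial.X ^ l) := by
  have hJ : psi Jp = 1 + Polynomial.X := by simp [psi, Jp]
  have hY : psi Yp = Polynomial.C (-Complex.I) * (1 - Polynomial.X) := by simp [psi, Yp]
  have hC : psi (C Complex.I) = Polynomial.C Complex.I := by simp [psi]
  have h1 : psi (Jp + C Complex.I * Yp) = 2 := by
    rw [map_add, map_mul, hJ, hY, hC]
    have : Complex.I * -Complex.I = 1 := by
      rw [mul_neg, Complex.I_mul_I, neg_neg]
    rw [← mul_assoc, ← Polynomial.C_mul, this]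
    rw [Polynomial.C_1]; ring
  have h2 : psi (Jp - C Complex.I * Yp) = 2 * Polynomial.X := by
    rw [map_sub, map_mul, hJ, hY, hC]
    have : Complex.I * -Complex.I = 1 := by
      rw [mul_neg, Complex.I_mul_I, neg_neg]
    rw [← mul_assoc, ← Polynomial.C_mul, this]
    rw [Polynomial.C_1]; ring
  rw [cpoly, map_add, map_pow, map_pow, h1, h2, mul_pow]
  ring

lemma coeff_psiB (j k r : ℕ) (hk : k ≤ j) (hr : r ≤ j) :
    (((1 + Polynomial.X) ^ k : Polynomial ℂ) * (2 ^ (2*j+1-k) * (1 + Polynomial.X ^ (2*j+1-k)))).coeff r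
      = (2 ^ (2*j+1-k) * (k.choose r) : ℂ) := by
  have h : ((1 + Polynomial.X) ^ k : Polynomial ℂ) * (2 ^ (2*j+1-k) * (1 + Polynomial.X ^ (2*j+1-k)))
      = 2 ^ (2*j+1-k) * (1 + Polynomial.X) ^ k
        + 2 ^ (2*j+1-k) * ((1 + Polynomial.X) ^ k * Polynomial.X ^ (2*j+1-k)) := by ring
  rw [h, Polynomial.coeff_add]
  have hlt : ¬ (2*j+1-k ≤ r) := by omega
  have h2 : (2:Polynomial ℂ) ^ (2*j+1-k) = Polynomial.C (2 ^ (2*j+1-k)) := by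
    rw [Polynomial.C_pow]; congr 1
  rw [h2, Polynomial.coeff_C_mul, Polynomial.coeff_C_mul,
    Polynomial.coeff_mul_X_pow', if_neg hlt, mul_zero, add_zero,
    Polynomial.coeff_one_add_X_pow]

lemma liB (j : ℕ) (B : Fin (j+1) → MvPolynomial (Fin 2) ℂ)
    (hB : ∀ k : Fin (j+1), B k = Jp ^ (k:ℕ) * cpoly (2*j+1-(k:ℕ))) :
    LinearIndependent ℚ B := by
  rw [Fintype.linearIndependent_iff]
  intro g hg
  have hpsiB : ∀ k : Fin (j+1), psi (B k)
      = (1 + Polynomial.X) ^ (k:ℕ) * (2 ^ (2*j+1-(k:ℕ)) * (1 + Polynomial.X ^ (2*j+1-(k:ℕ)))) := by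
    intro k
    rw [hB k, map_mul, map_pow, psi_cpoly]
    have hJ : psi Jp = 1 + Polynomial.X := by simp [psi, Jp]
    rw [hJ]
  have h0 : ∑ k : Fin (j+1), g k • psi (B k) = 0 := by
    have : psi (∑ k : Fin (j+1), g k • B k) = 0 := by rw [hg, map_zero]
    rw [map_sum] at this
    simpa only [AlgHom.map_smul_of_tower] using this
  have hcoef : ∀ r : ℕ, r ≤ j →
      ∑ k : Fin (j+1), (g k : ℂ) * (2 ^ (2*j+1-(k:ℕ)) * ((k:ℕ).choose r)) = 0 := by
    intro r hr
    have hc := congrArg (fun p => Polynomial.coeff p r) h0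
    simp only [Polynomial.finset_sum_coeff, Polynomial.coeff_smul, Polynomial.coeff_zero] at hc
    rw [← hc]
    apply Finset.sum_congr rfl
    intro k _
    rw [hpsiB k, coeff_psiB j k r (by omega) hr, Rat.smul_def]
  have core : ∀ i : Fin (j+1), (∀ k' : Fin (j+1), (i:ℕ) < (k':ℕ) → g k' = 0) → g i = 0 := by
    intro i hup
    have hs := hcoef (i:ℕ) (by omega)
    rw [Finset.sum_eq_single i] at hs
    · have h1 : ((i:ℕ).choose (i:ℕ) : ℂ) = 1 := by rw [Nat.choose_self]; norm_num
      rw [h1, mul_one] at hs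
      rcases mul_eq_zero.1 hs with h | h
      · exact_mod_cast h
      · exact absurd h (pow_ne_zero _ two_ne_zero)
    · intro k _ hk
      rcases lt_or_gt_of_ne (fun h : (k:ℕ) = (i:ℕ) => hk (Fin.ext h)) with h | h
      · rw [Nat.choose_eq_zero_of_lt h]; norm_num
      · rw [hup k h]; norm_num
    · intro h; exact absurd (Finset.mem_univ i) h
  have key : ∀ n : ℕ, ∀ i : Fin (j+1), j - n ≤ (i:ℕ) → g i = 0 := by
    intro n
    induction n with
    | zero =>
      intro i hi
      apply core
      intro k' hk'
      exact absurd hk' (by omega)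
    | succ n ih =>
      intro i hi
      by_cases h : j - n ≤ (i:ℕ)
      · exact ih i h
      · apply core
        intro k' hk'
        exact ih k' (by omega)
  intro i
  exact key j i (by omega)

lemma sum_range_two_mul {M : Type*} [AddCommMonoid M] (n : ℕ) (f : ℕ → M) :
    ∑ m ∈ Finset.range (2*n), f m = ∑ i ∈ Finset.range n, (f (2*i) + f (2*i+1)) := by
  induction n with
  | zero => simp
  | succ n ih =>
    rw [Finset.sum_range_succ, ← ih, show 2*(n+1) = 2*n+1+1 by ring,
      Finset.sum_range_succ, Finset.sum_range_succ, add_assoc]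

lemma cpoly_eq (j l : ℕ) (hl : l ≤ 2*j+1) :
    cpoly l = ∑ m ∈ Finset.range (j+1),
      C ((2:ℂ) * (-1)^m * ((l.choose (2*m)):ℂ)) * (Yp ^ (2*m) * Jp ^ (l - 2*m)) := by
  set f : ℕ → MvPolynomial (Fin 2) ℂ := fun m =>
    C (Complex.I^m + (-Complex.I)^m) * (Yp^m * Jp^(l-m)) * ((l.choose m : ℕ) : MvPolynomial (Fin 2) ℂ) with hf
  have stepA : cpoly l = ∑ m ∈ Finset.range (l+1), f m := by
    rw [cpoly, show Jp + C Complex.I * Yp = C Complex.I * Yp + Jp from add_comm _ _,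
      show Jp - C Complex.I * Yp = C (-Complex.I) * Yp + Jp by rw [map_neg]; ring,
      add_pow, add_pow, ← Finset.sum_add_distrib]
    apply Finset.sum_congr rfl
    intro m _
    rw [hf]
    simp only [mul_pow, ← C_pow, map_add]
    ring
  have stepB : ∑ m ∈ Finset.range (l+1), f m = ∑ m ∈ Finset.range (2*(j+1)), f m := by
    apply Finset.sum_subset (Finset.range_subset_range.2 (by omega))
    intro m _ hm
    rw [Finset.mem_range] at hm
    rw [hf]
    simp only
    rw [Nat.choose_eq_zero_of_lt (by omega), Nat.cast_zero, mul_zero]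
  rw [stepA, stepB, sum_range_two_mul]
  apply Finset.sum_congr rfl
  intro i _
  have hodd : f (2*i+1) = 0 := by
    rw [hf]
    simp only
    have : Complex.I ^ (2*i+1) + (-Complex.I) ^ (2*i+1) = 0 := by
      rw [Odd.neg_pow ⟨i, by ring⟩]; ring
    rw [this, map_zero, zero_mul, zero_mul]
  rw [hodd, add_zero, hf]
  simp only
  have : Complex.I ^ (2*i) + (-Complex.I) ^ (2*i) = 2 * (-1)^i := by
    rw [Even.neg_pow ⟨i, by ring⟩, pow_mul, Complex.I_sq]
    ring
  rw [this]
  rw [show ((l.choose (2*i) : ℕ) : MvPolynomial (Fin 2) ℂ) = C ((l.choose (2*i) : ℕ) : ℂ) by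
    rw [C_eq_coe_nat]]
  simp only [map_mul, map_pow, map_neg, map_one]
  ring

lemma rat_smul_eq (q : ℚ) (p : MvPolynomial (Fin 2) ℂ) : q • p = C (q:ℂ) * p := by
  rw [← MvPolynomial.smul_eq_C_mul]; norm_cast

lemma Bmem (j k : ℕ) (hk : k ≤ j) :
    Jp ^ k * cpoly (2*j+1-k) = ∑ m ∈ Finset.range (j+1),
      ((2 * (-1)^m * ((2*j+1-k).choose (2*m)) : ℚ)) • (Jp ^ (2*j+1-2*m) * Yp ^ (2*m)) := by
  rw [cpoly_eq j (2*j+1-k) (by omega), Finset.mul_sum]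
  apply Finset.sum_congr rfl
  intro m hm
  rw [Finset.mem_range] at hm
  rw [rat_smul_eq]
  have hcast : (((2 * (-1)^m * ((2*j+1-k).choose (2*m)) : ℚ)) : ℂ)
      = (2:ℂ) * (-1)^m * (((2*j+1-k).choose (2*m)) : ℂ) := by push_cast; ring
  rw [hcast]
  by_cases h2m : 2*m ≤ 2*j+1-k
  · rw [show 2*j+1-2*m = k + ((2*j+1-k) - 2*m) by omega, pow_add]
    ring
  · rw [Nat.choose_eq_zero_of_lt (by omega), Nat.cast_zero, mul_zero, map_zero,
      zero_mul, zero_mul, mul_zero]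

lemma liG (j : ℕ) (G : Fin (j+1) → MvPolynomial (Fin 2) ℂ)
    (hG : ∀ m : Fin (j+1), G m = Jp ^ (2*j+1-2*(m:ℕ)) * Yp ^ (2*(m:ℕ))) :
    LinearIndependent ℚ G := by
  have hli : LinearIndependent ℂ G := by
    have heq : G = (⇑(MvPolynomial.basisMonomials (Fin 2) ℂ)) ∘
        (fun m : Fin (j+1) =>
          (Finsupp.single (0:Fin 2) (2*j+1-2*(m:ℕ)) + Finsupp.single 1 (2*(m:ℕ)))) := by
      funext m
      simp only [Function.comp, coe_basisMonomials]
      rw [hG, Jp, Yp, X_pow_eq_monomial, X_pow_eq_monomial, monomial_mul, mul_one]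
    rw [heq]
    apply (MvPolynomial.basisMonomials (Fin 2) ℂ).linearIndependent.comp
    intro a b hab
    have h1 := congrArg (fun f => f (1 : Fin 2)) hab
    simp only [Finsupp.add_apply, Finsupp.single_apply] at h1
    have : 2*(a:ℕ) = 2*(b:ℕ) := by simpa using h1
    exact Fin.ext (by omega)
  apply hli.restrict_scalars
  intro a b hab
  have : ((a:ℂ)) = (b:ℂ) := by simpa [Rat.smul_def] using hab
  exact_mod_cast this

theorem stmt_6 (j : ℕ) (hj : 1 < j)
    (B G : Fin (j + 1) → MvPolynomial (Fin 2) ℂ)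
    (hB : ∀ k : Fin (j + 1), B k = Jp ^ (k : ℕ) * cpoly (2 * j + 1 - (k : ℕ)))
    (hG : ∀ m : Fin (j + 1), G m = Jp ^ (2 * j + 1 - 2 * (m : ℕ)) * Yp ^ (2 * (m : ℕ))) :
    LinearIndependent ℚ B ∧
      Submodule.span ℚ (Set.range B) = Submodule.span ℚ (Set.range G) := by
  have liB' := liB j B hB
  have liG' := liG j G hG
  have hle : Submodule.span ℚ (Set.range B) ≤ Submodule.span ℚ (Set.range G) := by
    rw [Submodule.span_le]
    rintro _ ⟨k, rfl⟩
    rw [hB k, Bmem j (k:ℕ) (by omega)]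
    apply Submodule.sum_mem
    intro m hm
    rw [Finset.mem_range] at hm
    apply Submodule.smul_mem
    apply Submodule.subset_span
    refine ⟨⟨m, by omega⟩, ?_⟩
    rw [hG]
  refine ⟨liB', ?_⟩
  haveI : FiniteDimensional ℚ (Submodule.span ℚ (Set.range G)) :=
    FiniteDimensional.span_of_finite ℚ (Set.finite_range G)
  apply Submodule.eq_of_le_of_finrank_le hle
  rw [finrank_span_eq_card liG', finrank_span_eq_card liB']
end

section
/- Define S(x) = (30/π^4) ∫_0^∞ I_0(xt) I_0(t) K_0(t)^4 · x t dt for x ∈ [-3, 3]. Then S is continuous on [-3, 3], and the Maclaurin series Σ_{k≥0} r_{5,k} x^{2k+1}, with r_{5,k} = (30 / (4^k (k!)^2 π^4)) ∫_0^∞ I_0(t) K_0(t)^4 t^{2k+1} dt, converges uniformly to S on [-3, 3]. -/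
open Real MeasureTheory

/-- Modified Bessel function of the first kind, order zero. -/
noncomputable def besselI0 (t : ℝ) : ℝ :=
  (1 / π) * ∫ θ in (0:ℝ)..π, Real.exp (t * Real.cos θ)

/-- Modified Bessel function of the second kind, order zero. -/
noncomputable def besselK0 (t : ℝ) : ℝ :=
  ∫ u in Set.Ioi (0:ℝ), Real.exp (-t * Real.cosh u)

/-- `S(x) = (30/π⁴) ∫_0^∞ I₀(xt) I₀(t) K₀(t)⁴ x t dt`. -/
noncomputable def S (x : ℝ) : ℝ :=
  (30 / π^4) * ∫ t in Set.Ioi (0:ℝ),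
    besselI0 (x * t) * besselI0 t * (besselK0 t)^4 * (x * t)

/-- Maclaurin coefficients `r_{5,k}` of the 5-step density. -/
noncomputable def r5 (k : ℕ) : ℝ :=
  (30 / (4^k * (Nat.factorial k : ℝ)^2 * π^4)) *
    ∫ t in Set.Ioi (0:ℝ), besselI0 t * (besselK0 t)^4 * t^(2*k+1)

open Set Filter Topology

/-!
Since `y I₀(y) = ∑ₖ y^(2k+1) / (4^k k!²)` has nonnegative coefficients, for `|x| ≤ 3` and `t ≥ 0`
the tail of this series at `y = xt` is dominated by its tail at `y = 3t`. Integrating against the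
weight `I₀(t) K₀(t)⁴`, the error of the `n`-th Maclaurin partial sum of `S` is therefore bounded,
uniformly on `[-3, 3]`, by the tail integral at `x = 3`, which tends to `0` by monotone
convergence as soon as `∫₀^∞ I₀(t) K₀(t)⁴ · 3t I₀(3t) dt < ∞`. That integral converges because
`t K₀(t)⁴` is bounded near `0`, while `√t I₀(t) ≤ eᵗ` and `√t K₀(t) ≤ √π e⁻ᵗ` make the integrand
`O(t⁻²)` at infinity. Continuity of `S` follows as a uniform limit of polynomials.
-/

@[fun_prop]
theorem continuous_besselI0 : Continuous besselI0 := by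
  unfold besselI0; fun_prop

theorem besselI0_nonneg (t : ℝ) : 0 ≤ besselI0 t :=
  mul_nonneg (by positivity)
    (intervalIntegral.integral_nonneg pi_pos.le fun _ _ => (exp_pos _).le)

theorem besselI0_le_exp_abs (t : ℝ) : besselI0 t ≤ exp |t| := by
  have h : ∫ θ in (0:ℝ)..π, exp (t * cos θ) ≤ ∫ θ in (0:ℝ)..π, exp |t| := by
    refine intervalIntegral.integral_mono_on pi_pos.le
      (by apply Continuous.intervalIntegrable; fun_prop) intervalIntegrable_const
      fun θ _ => exp_le_exp.2 ?_
    calc t * cos θ ≤ |t| * |cos θ| := by rw [← abs_mul]; exact le_abs_self _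
      _ ≤ |t| := mul_le_of_le_one_right (abs_nonneg t) (abs_cos_le_one θ)
  rw [intervalIntegral.integral_const, smul_eq_mul, sub_zero] at h
  calc besselI0 t ≤ 1 / π * (π * exp |t|) := mul_le_mul_of_nonneg_left h (by positivity)
    _ = exp |t| := by field_simp

theorem two_div_pi_sq_mul_sq_le_one_sub_cos {θ : ℝ} (h0 : 0 ≤ θ) (hπ : θ ≤ π) :
    2 / π ^ 2 * θ ^ 2 ≤ 1 - cos θ := by
  have hsin : 2 / π * (θ / 2) ≤ sin (θ / 2) := mul_le_sin (by linarith) (by linarith)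
  have hcos : cos θ = 1 - 2 * sin (θ / 2) ^ 2 := by
    rw [← cos_two_mul_eq_one_sub, mul_div_cancel₀ _ two_ne_zero]
  have hsq : (2 / π * (θ / 2)) ^ 2 ≤ sin (θ / 2) ^ 2 :=
    pow_le_pow_left₀ (by positivity) hsin 2
  rw [hcos]
  calc 2 / π ^ 2 * θ ^ 2 = 2 * (2 / π * (θ / 2)) ^ 2 := by ring
    _ ≤ _ := by linarith

theorem sqrt_mul_besselI0_le {t : ℝ} (ht : 0 < t) : √t * besselI0 t ≤ exp t := by
  set b := 2 * t / π ^ 2 with hb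
  have hb0 : 0 < b := by positivity
  have hint : ∫ θ in (0:ℝ)..π, exp (t * cos θ) ≤ exp t * (√(π / b) / 2) := by
    calc ∫ θ in (0:ℝ)..π, exp (t * cos θ)
        ≤ ∫ θ in (0:ℝ)..π, exp t * exp (-b * θ ^ 2) := by
          refine intervalIntegral.integral_mono_on pi_pos.le
            (by apply Continuous.intervalIntegrable; fun_prop)
            (by apply Continuous.intervalIntegrable; fun_prop) fun θ hθ => ?_
          rw [← exp_add, exp_le_exp]
          have := mul_le_mul_of_nonneg_left
            (two_div_pi_sq_mul_sq_le_one_sub_cos hθ.1 hθ.2) ht.le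
          have e : -b * θ ^ 2 = -(t * (2 / π ^ 2 * θ ^ 2)) := by rw [hb]; ring
          linarith
      _ = exp t * ∫ θ in Ioc 0 π, exp (-b * θ ^ 2) := by
          rw [intervalIntegral.integral_const_mul, intervalIntegral.integral_of_le pi_pos.le]
      _ ≤ exp t * ∫ θ in Ioi 0, exp (-b * θ ^ 2) := by
          refine mul_le_mul_of_nonneg_left (setIntegral_mono_set
            (integrable_exp_neg_mul_sq hb0).integrableOn
            (Eventually.of_forall fun _ => (exp_pos _).le) Ioc_subset_Ioi_self.eventuallyLE)
            (exp_pos t).le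
      _ = exp t * (√(π / b) / 2) := by rw [integral_gaussian_Ioi]
  have hroot : √t * √(π / b) ≤ 2 * π := by
    rw [← sqrt_mul ht.le, sqrt_le_iff]
    refine ⟨by positivity, ?_⟩
    rw [hb]
    field_simp
    nlinarith [pi_pos, pi_lt_four]
  calc √t * besselI0 t ≤ √t * (1 / π * (exp t * (√(π / b) / 2))) := by
        unfold besselI0; gcongr
    _ = exp t * (√t * √(π / b) / (2 * π)) := by field_simp
    _ ≤ exp t * 1 := by
        gcongr
        rw [div_le_one (by positivity)]; exact hroot
    _ = exp t := mul_one _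

theorem integral_cos_pow_two_mul_add_one (k : ℕ) :
    ∫ θ in (0:ℝ)..π, cos θ ^ (2 * k + 1) = 0 := by
  induction k with
  | zero => simp
  | succ n ih =>
    rw [show 2 * (n + 1) + 1 = 2 * n + 1 + 2 by ring, integral_cos_pow, ih]
    simp

noncomputable def besselI0Coeff (k : ℕ) : ℝ := ((4 : ℝ) ^ k * (k.factorial : ℝ) ^ 2)⁻¹

theorem besselI0Coeff_pos (k : ℕ) : 0 < besselI0Coeff k := by
  unfold besselI0Coeff; positivity

theorem integral_cos_pow_two_mul (k : ℕ) :
    ∫ θ in (0:ℝ)..π, cos θ ^ (2 * k) = π * (2 * k).factorial * besselI0Coeff k := by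
  induction k with
  | zero => simp [besselI0Coeff]
  | succ n ih =>
    rw [show 2 * (n + 1) = 2 * n + 2 by ring, integral_cos_pow, ih, besselI0Coeff, besselI0Coeff,
      Nat.factorial_succ, Nat.factorial_succ, Nat.factorial_succ]
    simp only [sin_pi, sin_zero, mul_zero, sub_zero, zero_div, zero_add]
    push_cast
    field_simp
    ring

theorem hasSum_integral_exp_mul_cos (y : ℝ) :
    HasSum (fun n : ℕ => y ^ n / n.factorial * ∫ θ in (0:ℝ)..π, cos θ ^ n)
      (∫ θ in (0:ℝ)..π, exp (y * cos θ)) := by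
  have hterm : ∀ n : ℕ, y ^ n / n.factorial * ∫ θ in (0:ℝ)..π, cos θ ^ n
      = ∫ θ in (0:ℝ)..π, (y * cos θ) ^ n / n.factorial := by
    intro n
    rw [← intervalIntegral.integral_const_mul]
    congr 1; ext θ; ring
  simp only [hterm]
  refine intervalIntegral.hasSum_integral_of_dominated_convergence
    (fun n _ => |y| ^ n / n.factorial) (fun n => by fun_prop) (fun n => ?_)
    (ae_of_all _ fun _ _ => summable_pow_div_factorial |y|) intervalIntegrable_const
    (ae_of_all _ fun θ _ => ?_)
  · refine ae_of_all _ fun θ _ => ?_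
    rw [norm_div, norm_pow, Real.norm_eq_abs, abs_mul, RCLike.norm_natCast]
    gcongr
    exact mul_le_of_le_one_right (abs_nonneg y) (abs_cos_le_one θ)
  · simpa [← exp_eq_exp_ℝ] using NormedSpace.expSeries_div_hasSum_exp (y * cos θ)

theorem hasSum_besselI0 (y : ℝ) :
    HasSum (fun k => besselI0Coeff k * y ^ (2 * k)) (besselI0 y) := by
  have h := (hasSum_integral_exp_mul_cos y).mul_left (1 / π)
  rw [← besselI0] at h
  have hodd : ∀ n ∉ Set.range (fun k : ℕ => 2 * k),
      1 / π * (y ^ n / n.factorial * ∫ θ in (0:ℝ)..π, cos θ ^ n) = 0 := by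
    intro n hn
    obtain ⟨k, rfl⟩ : Odd n := by simpa using hn
    rw [integral_cos_pow_two_mul_add_one]; ring
  refine ((Function.Injective.hasSum_iff (fun a b h => by simpa using h) hodd).2 h).congr_fun
    fun k => ?_
  simp only [Function.comp_apply, integral_cos_pow_two_mul]
  have : ((2 * k).factorial : ℝ) ≠ 0 := by positivity
  field_simp

theorem hasSum_mul_besselI0 (y : ℝ) :
    HasSum (fun k => besselI0Coeff k * y ^ (2 * k + 1)) (y * besselI0 y) :=
  ((hasSum_besselI0 y).mul_left y).congr_fun fun k => by ring

theorem norm_sub_sum_range_le_of_hasSum {E : Type*} [NormedAddCommGroup E] {f : ℕ → E}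
    {g : ℕ → ℝ} {a : E} {b : ℝ} (hf : HasSum f a) (hg : HasSum g b) (hfg : ∀ k, ‖f k‖ ≤ g k)
    (n : ℕ) : ‖a - ∑ k ∈ Finset.range n, f k‖ ≤ b - ∑ k ∈ Finset.range n, g k :=
  ((hasSum_nat_add_iff' n).2 hf).norm_le_of_bounded ((hasSum_nat_add_iff' n).2 hg) fun _ => hfg _

theorem abs_mul_besselI0_sub_sum_le {y Y : ℝ} (hy : |y| ≤ Y) (n : ℕ) :
    |y * besselI0 y - ∑ k ∈ Finset.range n, besselI0Coeff k * y ^ (2 * k + 1)|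
      ≤ Y * besselI0 Y - ∑ k ∈ Finset.range n, besselI0Coeff k * Y ^ (2 * k + 1) :=
  norm_sub_sum_range_le_of_hasSum (hasSum_mul_besselI0 y) (hasSum_mul_besselI0 Y) (fun k => by
    rw [Real.norm_eq_abs, abs_mul, abs_of_pos (besselI0Coeff_pos k), abs_pow]
    exact mul_le_mul_of_nonneg_left (by gcongr) (besselI0Coeff_pos k).le) n

theorem abs_mul_besselI0_le {y Y : ℝ} (hy : |y| ≤ Y) : |y * besselI0 y| ≤ Y * besselI0 Y := by
  simpa using abs_mul_besselI0_sub_sum_le hy 0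

section IntegralMulBesselI0

variable {μ : Measure ℝ} {F : ℝ → ℝ} {R : ℝ}

theorem integrable_mul_pow_of_integrable_mul_besselI0 (hR : 0 < R) (hpos : ∀ᵐ t ∂μ, 0 ≤ t)
    (hF : 0 ≤ᵐ[μ] F) (hFm : AEStronglyMeasurable F μ)
    (hint : Integrable (fun t => F t * (R * t * besselI0 (R * t))) μ) (k : ℕ) :
    Integrable (fun t => F t * t ^ (2 * k + 1)) μ := by
  set c := besselI0Coeff k * R ^ (2 * k + 1)
  have hc : 0 < c := mul_pos (besselI0Coeff_pos k) (by positivity)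
  refine (hint.const_mul c⁻¹).mono' (hFm.mul (continuous_pow _).aestronglyMeasurable) ?_
  filter_upwards [hpos, hF] with t ht (hFt : 0 ≤ F t)
  have hterm : c * t ^ (2 * k + 1) ≤ R * t * besselI0 (R * t) := by
    refine (le_of_eq ?_).trans (le_hasSum (hasSum_mul_besselI0 (R * t)) k fun j _ => ?_)
    · simp only [c]; ring
    · exact mul_nonneg (besselI0Coeff_pos j).le (by positivity)
  rw [norm_of_nonneg (by positivity), ← inv_mul_cancel_left₀ hc.ne' (F t * _)]
  refine mul_le_mul_of_nonneg_left ?_ (inv_nonneg.2 hc.le)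
  calc c * (F t * t ^ (2 * k + 1)) = F t * (c * t ^ (2 * k + 1)) := by ring
    _ ≤ F t * (R * t * besselI0 (R * t)) := mul_le_mul_of_nonneg_left hterm hFt

theorem mul_sum_besselI0Coeff_eq (n : ℕ) (x t : ℝ) :
    F t * ∑ k ∈ Finset.range n, besselI0Coeff k * (x * t) ^ (2 * k + 1)
      = ∑ k ∈ Finset.range n, besselI0Coeff k * x ^ (2 * k + 1) * (F t * t ^ (2 * k + 1)) := by
  rw [Finset.mul_sum]
  exact Finset.sum_congr rfl fun k _ => by ring

theorem integrable_mul_sum (hmom : ∀ k, Integrable (fun t => F t * t ^ (2 * k + 1)) μ)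
    (n : ℕ) (x : ℝ) :
    Integrable
      (fun t => F t * ∑ k ∈ Finset.range n, besselI0Coeff k * (x * t) ^ (2 * k + 1)) μ := by
  simp_rw [mul_sum_besselI0Coeff_eq]
  exact integrable_finsetSum _ fun k _ => (hmom k).const_mul _

theorem sum_integral_mul_pow_eq_integral_mul_sum
    (hmom : ∀ k, Integrable (fun t => F t * t ^ (2 * k + 1)) μ) (n : ℕ) (x : ℝ) :
    ∑ k ∈ Finset.range n, besselI0Coeff k * (∫ t, F t * t ^ (2 * k + 1) ∂μ) * x ^ (2 * k + 1)
      = ∫ t, F t * ∑ k ∈ Finset.range n, besselI0Coeff k * (x * t) ^ (2 * k + 1) ∂μ := by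
  simp_rw [mul_sum_besselI0Coeff_eq]
  rw [integral_finsetSum _ fun k _ => (hmom k).const_mul _]
  exact Finset.sum_congr rfl fun k _ => by rw [integral_const_mul]; ring

theorem abs_integral_mul_besselI0_sub_le (hpos : ∀ᵐ t ∂μ, 0 ≤ t) (hF : 0 ≤ᵐ[μ] F)
    (hFm : AEStronglyMeasurable F μ)
    (hint : Integrable (fun t => F t * (R * t * besselI0 (R * t))) μ)
    (hmom : ∀ k, Integrable (fun t => F t * t ^ (2 * k + 1)) μ) {x : ℝ} (hx : |x| ≤ R) (n : ℕ) :
    |∫ t, F t * (x * t * besselI0 (x * t)) ∂μ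
        - ∫ t, F t * ∑ k ∈ Finset.range n, besselI0Coeff k * (x * t) ^ (2 * k + 1) ∂μ|
      ≤ ∫ t, F t * (R * t * besselI0 (R * t)) ∂μ
        - ∫ t, F t * ∑ k ∈ Finset.range n, besselI0Coeff k * (R * t) ^ (2 * k + 1) ∂μ := by
  have hxt : ∀ t, 0 ≤ t → |x * t| ≤ R * t := fun t ht => by
    rw [abs_mul, abs_of_nonneg ht]; exact mul_le_mul_of_nonneg_right hx ht
  have hxint : Integrable (fun t => F t * (x * t * besselI0 (x * t))) μ := by
    refine hint.mono' (hFm.mul (by apply Continuous.aestronglyMeasurable; fun_prop)) ?_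
    filter_upwards [hpos, hF] with t ht (hFt : 0 ≤ F t)
    rw [norm_mul, norm_of_nonneg hFt, Real.norm_eq_abs]
    exact mul_le_mul_of_nonneg_left (abs_mul_besselI0_le (hxt t ht)) hFt
  rw [← integral_sub hxint (integrable_mul_sum hmom n x),
    ← integral_sub hint (integrable_mul_sum hmom n R), ← Real.norm_eq_abs]
  refine norm_integral_le_of_norm_le (hint.sub (integrable_mul_sum hmom n R)) ?_
  filter_upwards [hpos, hF] with t ht (hFt : 0 ≤ F t)
  rw [← mul_sub, ← mul_sub, norm_mul, norm_of_nonneg hFt, Real.norm_eq_abs]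
  exact mul_le_mul_of_nonneg_left (abs_mul_besselI0_sub_sum_le (hxt t ht) n) hFt

theorem tendsto_integral_mul_sum (hR : 0 ≤ R) (hpos : ∀ᵐ t ∂μ, 0 ≤ t) (hF : 0 ≤ᵐ[μ] F)
    (hint : Integrable (fun t => F t * (R * t * besselI0 (R * t))) μ)
    (hmom : ∀ k, Integrable (fun t => F t * t ^ (2 * k + 1)) μ) :
    Tendsto
      (fun n => ∫ t, F t * ∑ k ∈ Finset.range n, besselI0Coeff k * (R * t) ^ (2 * k + 1) ∂μ)
      atTop (𝓝 (∫ t, F t * (R * t * besselI0 (R * t)) ∂μ)) := by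
  refine integral_tendsto_of_tendsto_of_monotone (integrable_mul_sum hmom · R) hint ?_
    (ae_of_all _ fun t => ((hasSum_mul_besselI0 (R * t)).tendsto_sum_nat.const_mul (F t)))
  filter_upwards [hpos, hF] with t ht (hFt : 0 ≤ F t)
  refine fun m n hmn => mul_le_mul_of_nonneg_left ?_ hFt
  exact Finset.sum_le_sum_of_subset_of_nonneg (Finset.range_subset_range.2 hmn)
    fun k _ _ => mul_nonneg (besselI0Coeff_pos k).le (by positivity)

theorem tendstoUniformlyOn_sum_integral_mul_pow (hR : 0 < R) (hpos : ∀ᵐ t ∂μ, 0 ≤ t)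
    (hF : 0 ≤ᵐ[μ] F) (hFm : AEStronglyMeasurable F μ)
    (hint : Integrable (fun t => F t * (R * t * besselI0 (R * t))) μ) :
    TendstoUniformlyOn
      (fun n x => ∑ k ∈ Finset.range n,
        besselI0Coeff k * (∫ t, F t * t ^ (2 * k + 1) ∂μ) * x ^ (2 * k + 1))
      (fun x => ∫ t, F t * (x * t * besselI0 (x * t)) ∂μ) atTop (Icc (-R) R) := by
  have hmom := integrable_mul_pow_of_integrable_mul_besselI0 hR hpos hF hFm hint
  have htail := (tendsto_integral_mul_sum hR.le hpos hF hint hmom).const_sub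
    (∫ t, F t * (R * t * besselI0 (R * t)) ∂μ)
  rw [sub_self] at htail
  rw [Metric.tendstoUniformlyOn_iff]
  intro ε hε
  filter_upwards [htail.eventually (gt_mem_nhds hε)] with n hn x hx
  rw [Real.dist_eq, sum_integral_mul_pow_eq_integral_mul_sum hmom]
  exact (abs_integral_mul_besselI0_sub_le hpos hF hFm hint hmom (abs_le.2 hx) n).trans_lt hn

end IntegralMulBesselI0

theorem besselK0_nonneg (t : ℝ) : 0 ≤ besselK0 t :=
  integral_nonneg fun _ => (exp_pos _).le

theorem stronglyMeasurable_besselK0 : StronglyMeasurable besselK0 :=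
  StronglyMeasurable.integral_prod_right (f := fun t u => exp (-t * cosh u))
    (by apply Continuous.stronglyMeasurable; fun_prop)

theorem one_add_sq_div_four_le_cosh (u : ℝ) : 1 + u ^ 2 / 4 ≤ cosh u := by
  rw [← cosh_abs, cosh_eq]
  have h1 := quadratic_le_exp_of_nonneg (abs_nonneg u)
  have h2 := add_one_le_exp (-|u|)
  have h3 : |u| ^ 2 = u ^ 2 := sq_abs u
  linarith

theorem sqrt_mul_besselK0_le {t : ℝ} (ht : 0 < t) : √t * besselK0 t ≤ √π * exp (-t) := by
  have hK : besselK0 t ≤ exp (-t) * (√(π / (t / 4)) / 2) := by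
    calc besselK0 t ≤ ∫ u in Ioi (0:ℝ), exp (-t) * exp (-(t / 4) * u ^ 2) := by
          refine integral_mono_of_nonneg (ae_of_all _ fun _ => (exp_pos _).le)
            ((integrable_exp_neg_mul_sq (b := t / 4) (by positivity)).integrableOn.const_mul _)
            (ae_of_all _ fun u => ?_)
          simp only [← exp_add, exp_le_exp]
          nlinarith [one_add_sq_div_four_le_cosh u]
      _ = exp (-t) * (√(π / (t / 4)) / 2) := by rw [integral_const_mul, integral_gaussian_Ioi]
  have hroot : √t * √(π / (t / 4)) = 2 * √π := by
    rw [← sqrt_mul ht.le, show t * (π / (t / 4)) = 2 ^ 2 * π by field_simp; ring,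
      sqrt_mul (by positivity), sqrt_sq zero_le_two]
  calc √t * besselK0 t ≤ √t * (exp (-t) * (√(π / (t / 4)) / 2)) := by gcongr
    _ = √π * exp (-t) := by
        rw [mul_comm, mul_assoc, mul_comm _ √t, ← mul_div_assoc, hroot]; ring

theorem rpow_mul_exp_neg_le_one {y p : ℝ} (hy : 0 ≤ y) (hp0 : 0 ≤ p) (hp1 : p ≤ 1) :
    y ^ p * exp (-y) ≤ 1 := by
  have hbern := rpow_one_add_le_one_add_mul_self (s := y - 1) (by linarith) hp0 hp1
  rw [add_sub_cancel] at hbern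
  calc y ^ p * exp (-y) ≤ exp y * exp (-y) := by
        gcongr
        nlinarith [add_one_le_exp y]
    _ = 1 := by rw [← exp_add, add_neg_cancel, exp_zero]

theorem rpow_mul_besselK0_le {t : ℝ} (ht : 0 < t) : t ^ (1 / 4 : ℝ) * besselK0 t ≤ 8 := by
  have hpt : ∀ u : ℝ, t ^ (1 / 4 : ℝ) * exp (-t * cosh u) ≤ 2 * exp (-(1 / 4) * u) := by
    intro u
    have hc := cosh_pos u
    have hexp : exp (u / 4) ≤ 2 * cosh u ^ (1 / 4 : ℝ) := by
      calc exp (u / 4) = exp u ^ (1 / 4 : ℝ) := by rw [← exp_mul]; ring_nf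
        _ ≤ (2 * cosh u) ^ (1 / 4 : ℝ) := by
          gcongr
          rw [cosh_eq]; linarith [exp_pos (-u)]
        _ = 2 ^ (1 / 4 : ℝ) * cosh u ^ (1 / 4 : ℝ) := mul_rpow zero_le_two hc.le
        _ ≤ 2 * cosh u ^ (1 / 4 : ℝ) := by
          gcongr
          exact rpow_le_self_of_one_le one_le_two (by norm_num)
    have hy := rpow_mul_exp_neg_le_one (mul_pos ht hc).le (p := 1 / 4) (by norm_num) (by norm_num)
    rw [mul_rpow ht.le hc.le] at hy
    have key : t ^ (1 / 4 : ℝ) * exp (-t * cosh u) * exp (u / 4) ≤ 2 :=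
      calc t ^ (1 / 4 : ℝ) * exp (-t * cosh u) * exp (u / 4)
          ≤ t ^ (1 / 4 : ℝ) * exp (-t * cosh u) * (2 * cosh u ^ (1 / 4 : ℝ)) := by gcongr
        _ = 2 * (t ^ (1 / 4 : ℝ) * cosh u ^ (1 / 4 : ℝ) * exp (-(t * cosh u))) := by ring_nf
        _ ≤ 2 := by linarith
    calc t ^ (1 / 4 : ℝ) * exp (-t * cosh u)
        = t ^ (1 / 4 : ℝ) * exp (-t * cosh u) * exp (u / 4) * exp (-(1 / 4) * u) := by
          rw [mul_assoc _ (exp _), ← exp_add]; ring_nf; rw [exp_zero, mul_one]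
      _ ≤ 2 * exp (-(1 / 4) * u) := by gcongr
  calc t ^ (1 / 4 : ℝ) * besselK0 t = ∫ u in Ioi (0:ℝ), t ^ (1 / 4 : ℝ) * exp (-t * cosh u) :=
        (integral_const_mul _ _).symm
    _ ≤ ∫ u in Ioi (0:ℝ), 2 * exp (-(1 / 4) * u) :=
        integral_mono_of_nonneg (ae_of_all _ fun _ => by positivity)
          ((integrableOn_exp_mul_Ioi (by norm_num) 0).const_mul _) (ae_of_all _ hpt)
    _ = 8 := by rw [integral_const_mul, integral_exp_mul_Ioi (by norm_num)]; norm_num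

theorem besselI0_mul_besselK0_pow_four_mul_le_of_le_one {t : ℝ} (ht : 0 < t) (ht1 : t ≤ 1) :
    besselI0 t * besselK0 t ^ 4 * (3 * t * besselI0 (3 * t)) ≤ 3 * exp 4 * 8 ^ 4 := by
  have hI : besselI0 t ≤ exp 1 :=
    (besselI0_le_exp_abs t).trans (exp_le_exp.2 (by rw [abs_of_pos ht]; exact ht1))
  have hI3 : besselI0 (3 * t) ≤ exp 3 :=
    (besselI0_le_exp_abs _).trans (exp_le_exp.2 (by rw [abs_of_pos (by positivity)]; linarith))
  have hK : t * besselK0 t ^ 4 ≤ 8 ^ 4 := by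
    have h := pow_le_pow_left₀ (mul_nonneg (by positivity) (besselK0_nonneg t))
      (rpow_mul_besselK0_le ht) 4
    rwa [mul_pow, ← rpow_natCast, ← rpow_mul ht.le, show (1 / 4 : ℝ) * (4 : ℕ) = 1 by norm_num,
      rpow_one] at h
  have := besselI0_nonneg t
  have := besselI0_nonneg (3 * t)
  calc besselI0 t * besselK0 t ^ 4 * (3 * t * besselI0 (3 * t))
      = 3 * (besselI0 t * besselI0 (3 * t)) * (t * besselK0 t ^ 4) := by ring
    _ ≤ 3 * (exp 1 * exp 3) * 8 ^ 4 := by gcongr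
    _ = 3 * exp 4 * 8 ^ 4 := by rw [← exp_add]; norm_num

theorem besselI0_mul_besselK0_pow_four_mul_le {t : ℝ} (ht : 0 < t) :
    besselI0 t * besselK0 t ^ 4 * (3 * t * besselI0 (3 * t)) * t ^ 2 ≤ 3 * π ^ 2 := by
  have hI : t * (besselI0 t * besselI0 (3 * t)) ≤ exp (4 * t) := by
    have hroot : t ≤ √t * √(3 * t) := by
      rw [← sqrt_mul ht.le]
      exact le_sqrt_of_sq_le (by nlinarith)
    calc t * (besselI0 t * besselI0 (3 * t))
        ≤ √t * √(3 * t) * (besselI0 t * besselI0 (3 * t)) :=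
          mul_le_mul_of_nonneg_right hroot
            (mul_nonneg (besselI0_nonneg t) (besselI0_nonneg (3 * t)))
      _ = (√t * besselI0 t) * (√(3 * t) * besselI0 (3 * t)) := by ring
      _ ≤ exp t * exp (3 * t) := by
          gcongr
          · exact mul_nonneg (sqrt_nonneg _) (besselI0_nonneg _)
          · exact sqrt_mul_besselI0_le ht
          · exact sqrt_mul_besselI0_le (by positivity)
      _ = exp (4 * t) := by rw [← exp_add]; ring_nf
  have hK : t ^ 2 * besselK0 t ^ 4 ≤ π ^ 2 * exp (-(4 * t)) := by
    have h := pow_le_pow_left₀ (mul_nonneg (sqrt_nonneg t) (besselK0_nonneg t))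
      (sqrt_mul_besselK0_le ht) 4
    calc t ^ 2 * besselK0 t ^ 4 = (√t * besselK0 t) ^ 4 := by
          rw [mul_pow, show (4 : ℕ) = 2 * 2 from rfl, pow_mul, pow_mul, sq_sqrt ht.le]
      _ ≤ (√π * exp (-t)) ^ 4 := h
      _ = π ^ 2 * exp (-(4 * t)) := by
          rw [mul_pow, show (4 : ℕ) = 2 * 2 from rfl, pow_mul, sq_sqrt pi_pos.le, ← exp_nat_mul]
          ring_nf
  calc besselI0 t * besselK0 t ^ 4 * (3 * t * besselI0 (3 * t)) * t ^ 2
      = 3 * (t * (besselI0 t * besselI0 (3 * t))) * (t ^ 2 * besselK0 t ^ 4) := by ring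
    _ ≤ 3 * exp (4 * t) * (π ^ 2 * exp (-(4 * t))) := by
        have := besselI0_nonneg t
        have := besselI0_nonneg (3 * t)
        gcongr
    _ = 3 * π ^ 2 * (exp (4 * t) * exp (-(4 * t))) := by ring
    _ = 3 * π ^ 2 := by rw [← exp_add, add_neg_cancel, exp_zero, mul_one]

theorem integrableOn_besselI0_mul_besselK0_pow_four_mul :
    IntegrableOn (fun t => besselI0 t * besselK0 t ^ 4 * (3 * t * besselI0 (3 * t))) (Ioi 0) := by
  have hmeas : ∀ s : Set ℝ, AEStronglyMeasurable
      (fun t => besselI0 t * besselK0 t ^ 4 * (3 * t * besselI0 (3 * t))) (volume.restrict s) :=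
    fun s => (continuous_besselI0.aestronglyMeasurable.mul
      (stronglyMeasurable_besselK0.aestronglyMeasurable.pow 4)).mul
      (by apply Continuous.aestronglyMeasurable; fun_prop)
  have hnonneg : ∀ t, 0 ≤ t → 0 ≤ besselI0 t * besselK0 t ^ 4 * (3 * t * besselI0 (3 * t)) :=
    fun t ht => by have := besselI0_nonneg t; have := besselI0_nonneg (3 * t); positivity
  rw [← Ioc_union_Ioi_eq_Ioi zero_le_one]
  refine IntegrableOn.union ?_ ?_
  · refine Integrable.mono' (integrableOn_const (C := 3 * exp 4 * 8 ^ 4) measure_Ioc_lt_top.ne)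
      (hmeas _)
      ((ae_restrict_iff' measurableSet_Ioc).2 (ae_of_all _ fun t ht => ?_))
    rw [norm_of_nonneg (hnonneg t ht.1.le)]
    exact besselI0_mul_besselK0_pow_four_mul_le_of_le_one ht.1 ht.2
  · refine Integrable.mono' ((integrableOn_Ioi_rpow_of_lt (by norm_num : (-2 : ℝ) < -1)
      one_pos).const_mul (3 * π ^ 2)) (hmeas _)
      ((ae_restrict_iff' measurableSet_Ioi).2 (ae_of_all _ fun t (ht : 1 < t) => ?_))
    have ht0 : 0 < t := one_pos.trans ht
    rw [norm_of_nonneg (hnonneg t ht0.le), rpow_neg ht0.le, rpow_two, ← div_eq_mul_inv,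
      le_div_iff₀ (by positivity)]
    exact besselI0_mul_besselK0_pow_four_mul_le ht0

theorem stmt_10 :
    ContinuousOn S (Set.Icc (-3 : ℝ) 3) ∧
    TendstoUniformlyOn
      (fun n : ℕ => fun x : ℝ => ∑ k ∈ Finset.range n, r5 k * x^(2*k+1))
      S Filter.atTop (Set.Icc (-3 : ℝ) 3) := by
  set F : ℝ → ℝ := fun t => 30 / π ^ 4 * (besselI0 t * besselK0 t ^ 4)
  have hS : (fun x => ∫ t in Ioi 0, F t * (x * t * besselI0 (x * t))) = S := by
    ext x
    rw [S, ← integral_const_mul]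
    congr 1; ext t; ring
  have hr : ∀ k, besselI0Coeff k * ∫ t in Ioi 0, F t * t ^ (2 * k + 1) = r5 k := fun k => by
    rw [r5, besselI0Coeff, ← integral_const_mul, ← integral_const_mul]
    congr 1; ext t; simp only [F]; field_simp
  have hint : Integrable (fun t => F t * (3 * t * besselI0 (3 * t))) (volume.restrict (Ioi 0)) := by
    simpa only [F, mul_assoc] using
      integrableOn_besselI0_mul_besselK0_pow_four_mul.const_mul (30 / π ^ 4)
  have huni := tendstoUniformlyOn_sum_integral_mul_pow three_pos
    (ae_restrict_of_forall_mem measurableSet_Ioi fun _ => le_of_lt)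
    (ae_of_all _ fun t => show 0 ≤ F t from
      mul_nonneg (by positivity) (mul_nonneg (besselI0_nonneg t) (by positivity)))
    ((continuous_besselI0.aestronglyMeasurable.mul
      (stronglyMeasurable_besselK0.aestronglyMeasurable.pow 4)).const_mul _) hint
  simp_rw [hr, hS] at huni
  refine ⟨huni.continuousOn (Frequently.of_forall fun n => ?_), huni⟩
  fun_prop
end
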